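/- Explicit solution of the coupled backstress–projection system: let b > 0, g ≥ 0, and let σ*, α_prev ∈ S_d be given. Define α := α_prev + (b/(b+1))(σ* - α_prev - Φ_g(σ* - α_prev)) and σ := σ* - (1/b)(α - α_prev). Then α - α_prev = (b/(b+1))((σ*)^ - α_prev - Φ_g(σ* - α_prev)) and the pair (σ, α) satisfies the system: α - α_prev = b(σ* - σ) in the deviatoric part together with tr α = tr α_prev, tr σ = tr σ*, and σ - α = Φ_g(σ* - α). -/

import Mathlib

open Matrix BigOperators

/-- Frobenius inner product on d×d real matrices. -/
noncomputable def finner {d : ℕ} (A B : Matrix (Fin d) (Fin d) ℝ) : ℝ :=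
  ∑ i, ∑ j, A i j * B i j

/-- Frobenius norm. -/
noncomputable def fnorm {d : ℕ} (A : Matrix (Fin d) (Fin d) ℝ) : ℝ :=
  Real.sqrt (finner A A)

/-- Deviatoric part: A - (tr A / d) • I. -/
noncomputable def dev {d : ℕ} (A : Matrix (Fin d) (Fin d) ℝ) : Matrix (Fin d) (Fin d) ℝ :=
  A - (A.trace / (d : ℝ)) • (1 : Matrix (Fin d) (Fin d) ℝ)

/-- Pointwise projection onto {|τ^D| ≤ R}. -/
noncomputable def Phi {d : ℕ} (R : ℝ) (A : Matrix (Fin d) (Fin d) ℝ) :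
    Matrix (Fin d) (Fin d) ℝ :=
  if fnorm (dev A) ≤ R then A
  else (A.trace / (d : ℝ)) • (1 : Matrix (Fin d) (Fin d) ℝ) + (R / fnorm (dev A)) • dev A

/-!
Write `M = σ* - α_prev`. The increment `α - α_prev = (b/(b+1)) (M - Φ_g M)` is trace free, because
`Φ_g` preserves the trace; this gives the trace identities, and `σ - α = Φ_g M` follows from
`(1 + 1/b) · b/(b+1) = 1`. The last equation `Φ_g (σ* - α) = Φ_g M` is the fact that a projection
is constant on the segment from a point to its image: `σ* - α = M - t (M - Φ_g M)` with
`t = b/(b+1) ∈ [0, 1]`, and along that segment only the length of the deviatoric part changes,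
decreasing from `|M^D|` to `g`.
-/

section Deviatoric

variable {d : ℕ}

lemma dev_smul (c : ℝ) (A : Matrix (Fin d) (Fin d) ℝ) : dev (c • A) = c • dev A := by
  simp only [dev, trace_smul, smul_eq_mul, mul_div_assoc, mul_smul, smul_sub]

lemma eq_smul_one_add_dev (A : Matrix (Fin d) (Fin d) ℝ) :
    A = (A.trace / (d : ℝ)) • (1 : Matrix (Fin d) (Fin d) ℝ) + dev A := by
  rw [dev, add_sub_cancel]

lemma fnorm_smul (s : ℝ) (A : Matrix (Fin d) (Fin d) ℝ) : fnorm (s • A) = |s| * fnorm A := by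
  have hsq : finner (s • A) (s • A) = s ^ 2 * finner A A := by
    simp only [finner, Matrix.smul_apply, smul_eq_mul, Finset.mul_sum]
    exact Finset.sum_congr rfl fun i _ => Finset.sum_congr rfl fun j _ => by ring
  rw [fnorm, hsq, Real.sqrt_mul (sq_nonneg s), Real.sqrt_sq_eq_abs, fnorm]

variable [NeZero d]

lemma trace_smul_one_div (c : ℝ) :
    ((c / (d : ℝ)) • (1 : Matrix (Fin d) (Fin d) ℝ)).trace = c := by
  have hd : (d : ℝ) ≠ 0 := Nat.cast_ne_zero.mpr (NeZero.ne d)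
  simp [hd]

lemma trace_dev (A : Matrix (Fin d) (Fin d) ℝ) : (dev A).trace = 0 := by
  rw [dev, trace_sub, trace_smul_one_div, sub_self]

lemma trace_smul_one_add_smul_dev (c s : ℝ) (A : Matrix (Fin d) (Fin d) ℝ) :
    ((c / (d : ℝ)) • (1 : Matrix (Fin d) (Fin d) ℝ) + s • dev A).trace = c := by
  rw [trace_add, trace_smul_one_div, trace_smul, trace_dev, smul_zero, add_zero]

lemma dev_smul_one_add_smul_dev (c s : ℝ) (A : Matrix (Fin d) (Fin d) ℝ) :
    dev ((c / (d : ℝ)) • (1 : Matrix (Fin d) (Fin d) ℝ) + s • dev A) = s • dev A := by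
  rw [dev.eq_1 (_ + _), trace_smul_one_add_smul_dev]
  abel

end Deviatoric

section Projection

variable {d : ℕ}

lemma Phi_of_le {R : ℝ} {A : Matrix (Fin d) (Fin d) ℝ} (h : fnorm (dev A) ≤ R) :
    Phi R A = A :=
  if_pos h

lemma Phi_of_lt {R : ℝ} {A : Matrix (Fin d) (Fin d) ℝ} (h : R < fnorm (dev A)) :
    Phi R A = (A.trace / (d : ℝ)) • (1 : Matrix (Fin d) (Fin d) ℝ)
      + (R / fnorm (dev A)) • dev A :=
  if_neg h.not_ge

lemma sub_Phi_of_lt {R : ℝ} {A : Matrix (Fin d) (Fin d) ℝ} (h : R < fnorm (dev A)) :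
    A - Phi R A = (1 - R / fnorm (dev A)) • dev A := by
  rw [Phi_of_lt h, dev]
  module

variable [NeZero d]

lemma trace_Phi (R : ℝ) (A : Matrix (Fin d) (Fin d) ℝ) : (Phi R A).trace = A.trace := by
  rcases le_or_gt (fnorm (dev A)) R with h | h
  · rw [Phi_of_le h]
  · rw [Phi_of_lt h, trace_smul_one_add_smul_dev]

lemma trace_sub_Phi (R : ℝ) (A : Matrix (Fin d) (Fin d) ℝ) : (A - Phi R A).trace = 0 := by
  rw [trace_sub, trace_Phi, sub_self]

lemma Phi_smul_one_add_smul_dev {R s : ℝ} {A : Matrix (Fin d) (Fin d) ℝ} (hR : 0 ≤ R)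
    (hs : 0 ≤ s) (hA : 0 < fnorm (dev A)) (hsR : R ≤ s * fnorm (dev A)) :
    Phi R ((A.trace / (d : ℝ)) • (1 : Matrix (Fin d) (Fin d) ℝ) + s • dev A)
      = (A.trace / (d : ℝ)) • (1 : Matrix (Fin d) (Fin d) ℝ) + (R / fnorm (dev A)) • dev A := by
  have hdev := dev_smul_one_add_smul_dev A.trace s A
  have hnorm : fnorm (dev ((A.trace / (d : ℝ)) • (1 : Matrix (Fin d) (Fin d) ℝ) + s • dev A))
      = s * fnorm (dev A) := by
    rw [hdev, fnorm_smul, abs_of_nonneg hs]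
  rcases hsR.lt_or_eq with hlt | heq
  · have hs0 : s ≠ 0 := by rintro rfl; linarith
    rw [Phi_of_lt (hnorm ▸ hlt), hnorm, hdev, trace_smul_one_add_smul_dev, smul_smul]
    congr 2
    field_simp
  · rw [Phi_of_le (hnorm ▸ heq.ge), heq, mul_div_cancel_right₀ _ hA.ne']

lemma Phi_sub_smul_sub_Phi {R t : ℝ} (hR : 0 ≤ R) (ht₀ : 0 ≤ t) (ht₁ : t ≤ 1)
    (A : Matrix (Fin d) (Fin d) ℝ) :
    Phi R (A - t • (A - Phi R A)) = Phi R A := by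
  rcases le_or_gt (fnorm (dev A)) R with hle | hlt
  · rw [Phi_of_le hle, sub_self, smul_zero, sub_zero, Phi_of_le hle]
  set n := fnorm (dev A)
  have hn : 0 < n := hR.trans_lt hlt
  have hgn : 0 ≤ R / n := div_nonneg hR hn.le
  have hseg : A - t • (A - Phi R A)
      = (A.trace / (d : ℝ)) • (1 : Matrix (Fin d) (Fin d) ℝ) + (1 - t * (1 - R / n)) • dev A := by
    rw [sub_Phi_of_lt hlt]
    nth_rewrite 1 [eq_smul_one_add_dev A]
    module
  have hlen : R ≤ (1 - t * (1 - R / n)) * n := by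
    have : (1 - t * (1 - R / n)) * n = n - t * (n - R) := by field_simp
    nlinarith
  rw [hseg, Phi_smul_one_add_smul_dev hR (by nlinarith) hn hlen, Phi_of_lt hlt]

end Projection

theorem backstress_projection_system_general {d : ℕ} (hd : 2 ≤ d) (b g : ℝ)
    (hb : 0 < b) (hg : 0 ≤ g)
    (σs αprev : Matrix (Fin d) (Fin d) ℝ)
    (α σ : Matrix (Fin d) (Fin d) ℝ)
    (hα : α = αprev + (b / (b + 1)) • (σs - αprev - Phi g (σs - αprev)))
    (hσ : σ = σs - (1 / b) • (α - αprev)) :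
    α - αprev = (b / (b + 1)) • (σs - αprev - Phi g (σs - αprev)) ∧
    dev (α - αprev) = b • dev (σs - σ) ∧
    α.trace = αprev.trace ∧
    σ.trace = σs.trace ∧
    σ - α = Phi g (σs - α) := by
  have : NeZero d := ⟨by omega⟩
  set M := σs - αprev with hM
  set t := b / (b + 1) with ht
  have hincr : α - αprev = t • (M - Phi g M) := by rw [hα, add_sub_cancel_left]
  have htrα : α.trace = αprev.trace := by
    rw [hα, trace_add, trace_smul, trace_sub_Phi, smul_zero, add_zero]
  have hσdiff : σs - σ = (1 / b) • (α - αprev) := by rw [hσ, sub_sub_cancel]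
  have hσα : σ - α = Phi g M := by
    have hcoef : t + 1 / b * t = 1 := by rw [ht]; field_simp
    calc σ - α = M - (α - αprev) - (1 / b) • (α - αprev) := by rw [hσ, hM]; abel
      _ = Phi g M := by
        rw [hincr, smul_smul, sub_sub, ← add_smul, hcoef, one_smul, sub_sub_cancel]
  have hαs : σs - α = M - t • (M - Phi g M) := by
    rw [← hincr, hM]; abel
  refine ⟨hincr, ?_, htrα, ?_, ?_⟩
  · rw [hσdiff, dev_smul, smul_smul, mul_one_div_cancel hb.ne', one_smul]
  · rw [hσ, trace_sub, trace_smul, trace_sub, htrα, sub_self, smul_zero, sub_zero]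
  · have ht₁ : t ≤ 1 := div_le_one_of_le₀ (by linarith) (by linarith)
    rw [hσα, hαs, Phi_sub_smul_sub_Phi hg (by positivity) ht₁]

/-- explicit solution of the coupled backstress–projection system. -/
theorem backstress_projection_system {d : ℕ} (hd : 2 ≤ d) (b g : ℝ)
    (hb : 0 < b) (hg : 0 ≤ g)
    (σs αprev : Matrix (Fin d) (Fin d) ℝ) (hσs : σs.IsSymm) (hαprev : αprev.IsSymm)
    (α σ : Matrix (Fin d) (Fin d) ℝ)
    (hα : α = αprev + (b / (b + 1)) • (σs - αprev - Phi g (σs - αprev)))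
    (hσ : σ = σs - (1 / b) • (α - αprev)) :
    α - αprev = (b / (b + 1)) • (σs - αprev - Phi g (σs - αprev)) ∧
    dev (α - αprev) = b • dev (σs - σ) ∧
    α.trace = αprev.trace ∧
    σ.trace = σs.trace ∧
    σ - α = Phi g (σs - α) :=
  backstress_projection_system_general hd b g hb hg σs αprev α σ hα hσ
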